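/- Let f : Ω → 𝕆 be a slice function of class C¹ on a domain Ω ⊆ 𝕆. Then for every x ∈ Ω with Im(x) ≠ 0, the stem vector (u_x, v_x) of f at x satisfies 6·Im(x)·v_x = |Im(x)|·Γf(x), where Γ = -∑_{1≤m<n≤7} e_m(e_n L_{mn}) is the octonionic spherical Dirac operator and L_{mn} = x_m ∂/∂x_n - x_n ∂/∂x_m. -/

import Mathlib

noncomputable section

/-- The octonions, realized as the Cayley–Dickson double of the quaternions. -/
@[ext] structure Octonion : Type where
  a : Quaternion ℝ
  b : Quaternion ℝ

notation "𝕆" => Octonion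

namespace Octonion

instance : Zero 𝕆 := ⟨⟨0, 0⟩⟩
instance : One 𝕆 := ⟨⟨1, 0⟩⟩
instance : Add 𝕆 := ⟨fun x y => ⟨x.a + y.a, x.b + y.b⟩⟩
instance : Neg 𝕆 := ⟨fun x => ⟨-x.a, -x.b⟩⟩
instance : Sub 𝕆 := ⟨fun x y => ⟨x.a - y.a, x.b - y.b⟩⟩
/-- Cayley–Dickson multiplication. -/
instance : Mul 𝕆 := ⟨fun x y => ⟨x.a * y.a - star y.b * x.b, y.b * x.a + x.b * star y.a⟩⟩
instance : SMul ℝ 𝕆 := ⟨fun r x => ⟨r • x.a, r • x.b⟩⟩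
instance : SMul ℕ 𝕆 := ⟨fun n x => ⟨n • x.a, n • x.b⟩⟩
instance : SMul ℤ 𝕆 := ⟨fun n x => ⟨n • x.a, n • x.b⟩⟩

def toProd (x : 𝕆) : Quaternion ℝ × Quaternion ℝ := (x.a, x.b)

lemma toProd_injective : Function.Injective toProd := by
  intro x y h
  cases x; cases y
  simpa [toProd, Prod.ext_iff, Octonion.mk.injEq] using h

instance : AddCommGroup 𝕆 :=
  Function.Injective.addCommGroup toProd toProd_injective rfl (fun _ _ => rfl) (fun _ => rfl)
    (fun _ _ => rfl) (fun _ _ => rfl) (fun _ _ => rfl)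

def toProdHom : 𝕆 →+ Quaternion ℝ × Quaternion ℝ :=
  { toFun := toProd, map_zero' := rfl, map_add' := fun _ _ => rfl }

instance : Module ℝ 𝕆 :=
  Function.Injective.module ℝ toProdHom toProd_injective (fun _ _ => rfl)

def toProdLin : 𝕆 →ₗ[ℝ] Quaternion ℝ × Quaternion ℝ :=
  { toFun := toProd, map_add' := fun _ _ => rfl, map_smul' := fun _ _ => rfl }

instance : NormedAddCommGroup 𝕆 := NormedAddCommGroup.induced 𝕆 _ toProdHom toProd_injective
instance : NormedSpace ℝ 𝕆 := NormedSpace.induced ℝ 𝕆 _ toProdLin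

/-- Octonionic conjugation. -/
def conj (x : 𝕆) : 𝕆 := ⟨star x.a, -x.b⟩

/-- The real part of an octonion. -/
def re (x : 𝕆) : ℝ := x.a.re

/-- The imaginary part of an octonion. -/
def im (x : 𝕆) : 𝕆 := ⟨x.a.im, x.b⟩

/-- The squared (Euclidean) norm of an octonion. -/
def normSq (x : 𝕆) : ℝ := Quaternion.normSq x.a + Quaternion.normSq x.b

/-- The (Euclidean) norm of an octonion. -/
def onorm (x : 𝕆) : ℝ := Real.sqrt (normSq x)

instance : Inv 𝕆 := ⟨fun x => (normSq x)⁻¹ • conj x⟩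

/-- The sphere of imaginary units of `𝕆`. -/
def sph : Set 𝕆 := {I | onorm I = 1 ∧ re I = 0}

/-- `tau I (α + β i) = α + β I`. -/
def tau (I : 𝕆) (z : ℂ) : 𝕆 := z.re • (1 : 𝕆) + z.im • I

end Octonion

namespace Octonion

/-- `𝕊(Ω,a,b)`: the set of imaginary units `I` with `a + bI ∈ Ω`. -/
def sSet (Ω : Set 𝕆) (a b : ℝ) : Set 𝕆 := {I | I ∈ sph ∧ a • (1 : 𝕆) + b • I ∈ Ω}

/-- `Ω` is circularly connected if every `𝕊(Ω,a,b)` is connected. -/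
def CircularlyConnected (Ω : Set 𝕆) : Prop :=
  ∀ a b : ℝ, 0 < b → IsPreconnected (sSet Ω a b)

/-- `f` is a (left) slice function on `Ω`: for every connected component of each nonempty
`𝕊(Ω,a,b)` there is a pair `(u,v)` with `f (a + bI) = u + Iv` on that component. -/
def IsSliceFunction (Ω : Set 𝕆) (f : 𝕆 → 𝕆) : Prop :=
  ∀ (a b : ℝ), 0 < b → ∀ I ∈ sSet Ω a b, ∃ u v : 𝕆,
    ∀ J ∈ connectedComponentIn (sSet Ω a b) I, f (a • (1 : 𝕆) + b • J) = u + J * v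

open Classical

/-- `(u,v)` is the stem vector of the slice function `f` at `x ∈ Ω`: for real `x` it is
`(f x, 0)`; otherwise, writing `x = a + bI` with `b = |Im x| > 0` and `I` an imaginary unit,
it is the solution of `f (a + bJ) = u + Jv` on the connected component of `𝕊(Ω,a,b)`
containing `I`. -/
def IsStemVector (Ω : Set 𝕆) (f : 𝕆 → 𝕆) (x : 𝕆) (u v : 𝕆) : Prop :=
  if im x = 0 then u = f x ∧ v = 0
  else ∀ K ∈ connectedComponentIn (sSet Ω (re x) (onorm (im x))) ((onorm (im x))⁻¹ • im x),
    f (re x • (1 : 𝕆) + onorm (im x) • K) = u + K * v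

end Octonion

namespace Octonion

/-- The standard real basis `e₀ = 1, e₁, …, e₇` of the octonions. -/
def e : Fin 8 → 𝕆 :=
  ![⟨1, 0⟩, ⟨⟨0, 1, 0, 0⟩, 0⟩, ⟨⟨0, 0, 1, 0⟩, 0⟩, ⟨⟨0, 0, 0, 1⟩, 0⟩,
    ⟨0, 1⟩, ⟨0, ⟨0, 1, 0, 0⟩⟩, ⟨0, ⟨0, 0, 1, 0⟩⟩, ⟨0, ⟨0, 0, 0, 1⟩⟩]

/-- The real coordinates `x₀, …, x₇` of an octonion. -/
def coord : Fin 8 → 𝕆 → ℝ :=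
  ![fun x => x.a.re, fun x => x.a.imI, fun x => x.a.imJ, fun x => x.a.imK,
    fun x => x.b.re, fun x => x.b.imI, fun x => x.b.imJ, fun x => x.b.imK]

/-- The spherical tangential differential operator
`L_{mn} f = x_m ∂f/∂x_n - x_n ∂f/∂x_m`. -/
def Lop (m n : Fin 8) (f : 𝕆 → 𝕆) (x : 𝕆) : 𝕆 :=
  coord m x • fderiv ℝ f x (e n) - coord n x • fderiv ℝ f x (e m)

/-- The octonionic spherical Dirac operator `Γ = -∑_{1 ≤ m < n ≤ 7} e_m (e_n L_{mn})`. -/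
def Gamma (f : 𝕆 → 𝕆) (x : 𝕆) : 𝕆 :=
  -∑ m : Fin 8, ∑ n : Fin 8,
    if 1 ≤ (m : ℕ) ∧ (m : ℕ) < (n : ℕ) then e m * (e n * Lop m n f x) else 0

end Octonion

/-! Rotating `x` in the coordinate plane of `e m, e n` (`1 ≤ m < n ≤ 7`) fixes `re x` and `|Im x|`,
so for small angles the rotated point stays in `re x + |Im x| Λ`, where `Λ` is the connected
component of `𝕊(Ω, re x, |Im x|)` on which `f (re x + |Im x| J) = u + J v`. Differentiating at angle
`0` gives `L_{mn} f (x) = |Im x|⁻¹ (x_m e_n - x_n e_m) v`. The identities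
`e_m (e_n (e_n a)) = -e_m a` and `e_m (e_n (e_m a)) = e_n a` turn the summand of `Γ f (x)` for the
pair `m < n` into `-|Im x|⁻¹ (x_m e_m v + x_n e_n v)`; each index occurs in six pairs, whence
`Γ f (x) = 6 |Im x|⁻¹ Im(x) v`. -/

open scoped Quaternion Topology

theorem eventually_mem_connectedComponentIn {X : Type*} [TopologicalSpace X] {γ : ℝ → X}
    {S : Set X} {t₀ : ℝ} (hγ : Continuous γ) (hS : ∀ᶠ t in 𝓝 t₀, γ t ∈ S) :
    ∀ᶠ t in 𝓝 t₀, γ t ∈ connectedComponentIn S (γ t₀) := by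
  obtain ⟨l, r, hlr, hsub⟩ := mem_nhds_iff_exists_Ioo_subset.1 hS
  filter_upwards [Ioo_mem_nhds hlr.1 hlr.2] with t ht
  exact (isPreconnected_Ioo.image γ hγ.continuousOn).subset_connectedComponentIn
    (Set.mem_image_of_mem γ hlr) (Set.image_subset_iff.2 hsub) (Set.mem_image_of_mem γ ht)

lemma sum_pairs_eq_six_smul {M : Type*} [AddCommGroup M] (g : Fin 8 → M) :
    ∑ m : Fin 8, ∑ n : Fin 8, (if 1 ≤ (m : ℕ) ∧ (m : ℕ) < (n : ℕ) then g m + g n else 0)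
      = 6 • ∑ l : Fin 7, g l.succ := by
  simp [Fin.sum_univ_eight, Fin.sum_univ_seven]
  abel

namespace Octonion

lemma mul_a (x y : 𝕆) : (x * y).a = x.a * y.a - star y.b * x.b := rfl
lemma mul_b (x y : 𝕆) : (x * y).b = y.b * x.a + x.b * star y.a := rfl
@[simp] lemma add_a (x y : 𝕆) : (x + y).a = x.a + y.a := rfl
@[simp] lemma add_b (x y : 𝕆) : (x + y).b = x.b + y.b := rfl
@[simp] lemma sub_a (x y : 𝕆) : (x - y).a = x.a - y.a := rfl
@[simp] lemma sub_b (x y : 𝕆) : (x - y).b = x.b - y.b := rfl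
@[simp] lemma neg_a (x : 𝕆) : (-x).a = -x.a := rfl
@[simp] lemma neg_b (x : 𝕆) : (-x).b = -x.b := rfl
@[simp] lemma smul_a (r : ℝ) (x : 𝕆) : (r • x).a = r • x.a := rfl
@[simp] lemma smul_b (r : ℝ) (x : 𝕆) : (r • x).b = r • x.b := rfl
@[simp] lemma zero_a : (0 : 𝕆).a = 0 := rfl
@[simp] lemma zero_b : (0 : 𝕆).b = 0 := rfl
@[simp] lemma one_a : (1 : 𝕆).a = 1 := rfl
@[simp] lemma one_b : (1 : 𝕆).b = 0 := rfl

instance : NonUnitalNonAssocRing 𝕆 :=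
  { (inferInstance : AddCommGroup 𝕆) with
    left_distrib := fun x y z => by ext <;> simp [mul_a, mul_b] <;> ring
    right_distrib := fun x y z => by ext <;> simp [mul_a, mul_b] <;> ring
    zero_mul := fun x => by ext <;> simp [mul_a, mul_b]
    mul_zero := fun x => by ext <;> simp [mul_a, mul_b] }

instance : IsScalarTower ℝ 𝕆 𝕆 :=
  ⟨fun r x y => by ext <;> simp [mul_a, mul_b, smul_eq_mul] <;> ring⟩

instance : SMulCommClass ℝ 𝕆 𝕆 :=
  ⟨fun r x y => by ext <;> simp [mul_a, mul_b, smul_eq_mul] <;> ring⟩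

instance : FiniteDimensional ℝ 𝕆 := .of_injective toProdLin toProd_injective

lemma e_one_mul (y : 𝕆) :
    e 1 * y = ⟨⟨-y.a.imI, y.a.re, -y.a.imK, y.a.imJ⟩, ⟨-y.b.imI, y.b.re, y.b.imK, -y.b.imJ⟩⟩ := by
  ext <;> simp [mul_a, mul_b] <;> simp [e]

lemma e_two_mul (y : 𝕆) :
    e 2 * y = ⟨⟨-y.a.imJ, y.a.imK, y.a.re, -y.a.imI⟩, ⟨-y.b.imJ, -y.b.imK, y.b.re, y.b.imI⟩⟩ := by
  ext <;> simp [mul_a, mul_b] <;> simp [e]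

lemma e_three_mul (y : 𝕆) :
    e 3 * y = ⟨⟨-y.a.imK, -y.a.imJ, y.a.imI, y.a.re⟩, ⟨-y.b.imK, y.b.imJ, -y.b.imI, y.b.re⟩⟩ := by
  ext <;> simp [mul_a, mul_b] <;> simp [e]

lemma e_four_mul (y : 𝕆) :
    e 4 * y = ⟨⟨-y.b.re, y.b.imI, y.b.imJ, y.b.imK⟩, ⟨y.a.re, -y.a.imI, -y.a.imJ, -y.a.imK⟩⟩ := by
  ext <;> simp [mul_a, mul_b] <;> simp [e]

lemma e_five_mul (y : 𝕆) :
    e 5 * y = ⟨⟨-y.b.imI, -y.b.re, y.b.imK, -y.b.imJ⟩, ⟨y.a.imI, y.a.re, y.a.imK, -y.a.imJ⟩⟩ := by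
  ext <;> simp [mul_a, mul_b] <;> simp [e]

lemma e_six_mul (y : 𝕆) :
    e 6 * y = ⟨⟨-y.b.imJ, -y.b.imK, -y.b.re, y.b.imI⟩, ⟨y.a.imJ, -y.a.imK, y.a.re, y.a.imI⟩⟩ := by
  ext <;> simp [mul_a, mul_b] <;> simp [e]

lemma e_seven_mul (y : 𝕆) :
    e 7 * y = ⟨⟨-y.b.imK, y.b.imJ, -y.b.imI, -y.b.re⟩, ⟨y.a.imK, y.a.imJ, -y.a.imI, y.a.re⟩⟩ := by
  ext <;> simp [mul_a, mul_b] <;> simp [e]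

lemma fin_eight_cases_of_ne_zero {n : Fin 8} (hn : n ≠ 0) :
    n = 1 ∨ n = 2 ∨ n = 3 ∨ n = 4 ∨ n = 5 ∨ n = 6 ∨ n = 7 := by
  omega

lemma e_mul_e_mul {n : Fin 8} (hn : n ≠ 0) (y : 𝕆) : e n * (e n * y) = -y := by
  rcases fin_eight_cases_of_ne_zero hn with rfl | rfl | rfl | rfl | rfl | rfl | rfl <;>
    simp only [e_one_mul, e_two_mul, e_three_mul, e_four_mul, e_five_mul, e_six_mul,
      e_seven_mul] <;> ext <;> simp

lemma e_mul_e_mul_e_mul {m n : Fin 8} (hm : m ≠ 0) (hn : n ≠ 0) (hmn : m ≠ n) (y : 𝕆) :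
    e m * (e n * (e m * y)) = e n * y := by
  rcases fin_eight_cases_of_ne_zero hm with rfl | rfl | rfl | rfl | rfl | rfl | rfl <;>
    rcases fin_eight_cases_of_ne_zero hn with rfl | rfl | rfl | rfl | rfl | rfl | rfl <;>
    first
    | exact absurd rfl hmn
    | simp only [e_one_mul, e_two_mul, e_three_mul, e_four_mul, e_five_mul, e_six_mul,
        e_seven_mul]; ext <;> simp

lemma coord_add (l : Fin 8) (x y : 𝕆) : coord l (x + y) = coord l x + coord l y := by
  fin_cases l <;> rfl

lemma coord_sub (l : Fin 8) (x y : 𝕆) : coord l (x - y) = coord l x - coord l y := by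
  fin_cases l <;> rfl

lemma coord_smul (l : Fin 8) (r : ℝ) (x : 𝕆) : coord l (r • x) = r * coord l x := by
  fin_cases l <;> rfl

lemma coord_e (l k : Fin 8) : coord l (e k) = if l = k then 1 else 0 := by
  fin_cases l <;> fin_cases k <;> rfl

lemma normSq_eq_sum_coord (x : 𝕆) : normSq x = ∑ l, coord l x ^ 2 := by
  simp [normSq, Quaternion.normSq_def', Fin.sum_univ_eight, coord]
  ring

lemma normSq_eq_re_sq_add_normSq_im (x : 𝕆) : normSq x = re x ^ 2 + normSq (im x) := by
  simp [normSq, re, im, Quaternion.normSq_def']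
  ring

lemma normSq_smul (r : ℝ) (x : 𝕆) : normSq (r • x) = r ^ 2 * normSq x := by
  simp [normSq, Quaternion.normSq_smul]
  ring

lemma onorm_smul (r : ℝ) (x : 𝕆) : onorm (r • x) = |r| * onorm x := by
  rw [onorm, normSq_smul, Real.sqrt_mul (sq_nonneg r), Real.sqrt_sq_eq_abs, onorm]

lemma onorm_pos {x : 𝕆} (hx : x ≠ 0) : 0 < onorm x := by
  rw [onorm, Real.sqrt_pos]
  by_contra h
  have ha := Quaternion.normSq_nonneg (a := x.a)
  have hb := Quaternion.normSq_nonneg (a := x.b)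
  exact hx (Octonion.ext (Quaternion.normSq_eq_zero.1 (by unfold normSq at h; linarith))
    (Quaternion.normSq_eq_zero.1 (by unfold normSq at h; linarith)))

lemma re_smul (r : ℝ) (x : 𝕆) : re (r • x) = r * re x := rfl

lemma re_im (x : 𝕆) : re (im x) = 0 := rfl

lemma im_eq_sub (x : 𝕆) : im x = x - re x • 1 := by
  ext <;> simp [im, re]

lemma im_eq_sum (x : 𝕆) : im x = ∑ l : Fin 7, coord l.succ x • e l.succ := by
  ext <;> simp [im, Fin.sum_univ_seven, coord] <;> simp [e]

lemma im_mul_eq_sum (x y : 𝕆) : im x * y = ∑ l : Fin 7, coord l.succ x • (e l.succ * y) := by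
  simp [im_eq_sum x, Finset.sum_mul, smul_mul_assoc]

def planeRotation (m n : Fin 8) (t : ℝ) (x : 𝕆) : 𝕆 :=
  x + (Real.cos t - 1) • (coord m x • e m + coord n x • e n)
    + Real.sin t • (coord m x • e n - coord n x • e m)

section planeRotation

variable {m n : Fin 8} (t : ℝ) (x : 𝕆)

lemma coord_planeRotation_of_ne {l : Fin 8} (hlm : l ≠ m) (hln : l ≠ n) :
    coord l (planeRotation m n t x) = coord l x := by
  simp [planeRotation, coord_add, coord_sub, coord_smul, coord_e, hlm, hln]

lemma coord_planeRotation_left (hmn : m ≠ n) :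
    coord m (planeRotation m n t x) = Real.cos t * coord m x - Real.sin t * coord n x := by
  simp [planeRotation, coord_add, coord_sub, coord_smul, coord_e, hmn]
  ring

lemma coord_planeRotation_right (hmn : m ≠ n) :
    coord n (planeRotation m n t x) = Real.sin t * coord m x + Real.cos t * coord n x := by
  simp [planeRotation, coord_add, coord_sub, coord_smul, coord_e, hmn.symm]
  ring

lemma re_planeRotation (hm : m ≠ 0) (hn : n ≠ 0) : re (planeRotation m n t x) = re x :=
  coord_planeRotation_of_ne t x hm.symm hn.symm

lemma normSq_planeRotation (hmn : m ≠ n) : normSq (planeRotation m n t x) = normSq x := by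
  rw [normSq_eq_sum_coord, normSq_eq_sum_coord, ← sub_eq_zero, ← Finset.sum_sub_distrib,
    Fintype.sum_eq_add m n hmn fun l hl => by rw [coord_planeRotation_of_ne t x hl.1 hl.2, sub_self],
    coord_planeRotation_left t x hmn, coord_planeRotation_right t x hmn]
  linear_combination (coord m x ^ 2 + coord n x ^ 2) * Real.sin_sq_add_cos_sq t

lemma normSq_im_planeRotation (hm : m ≠ 0) (hn : n ≠ 0) (hmn : m ≠ n) :
    normSq (im (planeRotation m n t x)) = normSq (im x) := by
  have h := normSq_planeRotation t x hmn
  rw [normSq_eq_re_sq_add_normSq_im, normSq_eq_re_sq_add_normSq_im x,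
    re_planeRotation t x hm hn] at h
  linarith

variable (m n)

@[simp]
lemma planeRotation_zero : planeRotation m n 0 x = x := by
  simp [planeRotation]

lemma continuous_planeRotation : Continuous fun t => planeRotation m n t x := by
  unfold planeRotation
  fun_prop

lemma hasDerivAt_planeRotation :
    HasDerivAt (fun t => planeRotation m n t x) (coord m x • e n - coord n x • e m) 0 := by
  have h := (((Real.hasDerivAt_cos 0).sub_const 1).smul_const (coord m x • e m + coord n x • e n)
    |>.const_add x).add ((Real.hasDerivAt_sin 0).smul_const (coord m x • e n - coord n x • e m))
  simp only [Real.sin_zero, Real.cos_zero, neg_zero, zero_smul, zero_add, one_smul] at h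
  exact h

end planeRotation

namespace IsStemVector

variable {Ω : Set 𝕆} {f : 𝕆 → 𝕆} {x u v : 𝕆}

theorem fderiv_apply_eq (hs : IsStemVector Ω f x u v) (him : im x ≠ 0) (hΩ : IsOpen Ω)
    (hx : x ∈ Ω) (hfx : DifferentiableAt ℝ f x) {c : ℝ → 𝕆} {w : 𝕆} (hc : Continuous c)
    (hc0 : c 0 = x) (hre : ∀ t, re (c t) = re x)
    (hnorm : ∀ t, normSq (im (c t)) = normSq (im x)) (hw : HasDerivAt c w 0) :
    fderiv ℝ f x w = (onorm (im x))⁻¹ • (w * v) := by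
  rw [IsStemVector, if_neg him] at hs
  set b := onorm (im x)
  have hb : 0 < b := onorm_pos him
  set K : ℝ → 𝕆 := fun t => b⁻¹ • (c t - re x • 1) with hK
  have hK_im : ∀ t, K t = b⁻¹ • im (c t) := fun t => by rw [im_eq_sub, hre]
  have hcK : ∀ t, re x • 1 + b • K t = c t := fun t => by
    rw [hK, smul_inv_smul₀ hb.ne', add_sub_cancel]
  have hK_sph : ∀ t, K t ∈ sph := fun t => by
    refine ⟨?_, by rw [hK_im, re_smul, re_im, mul_zero]⟩
    rw [hK_im, onorm_smul, onorm, hnorm, ← onorm, abs_of_pos (inv_pos.2 hb), inv_mul_cancel₀ hb.ne']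
  have hK_mem : ∀ᶠ t in 𝓝 0, K t ∈ sSet Ω (re x) b := by
    have hcΩ : ∀ᶠ t in 𝓝 0, c t ∈ Ω := hc.continuousAt.preimage_mem_nhds (hc0 ▸ hΩ.mem_nhds hx)
    filter_upwards [hcΩ] with t ht
    exact ⟨hK_sph t, (hcK t).symm ▸ ht⟩
  have hK0 : K 0 = b⁻¹ • im x := by rw [hK_im, hc0]
  have hfc : f ∘ c =ᶠ[𝓝 0] fun t => u + K t * v := by
    filter_upwards [eventually_mem_connectedComponentIn (by fun_prop) hK_mem] with t ht
    rw [Function.comp_apply, ← hcK t]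
    exact hs _ (hK0 ▸ ht)
  have hK' : HasDerivAt K (b⁻¹ • w) 0 := (hw.sub_const _).fun_const_smul _
  have hrhs : HasDerivAt (fun t => u + K t * v) (b⁻¹ • (w * v)) 0 := by
    simpa [smul_mul_assoc] using
      ((LinearMap.mulRight ℝ v).toContinuousLinearMap.hasFDerivAt.comp_hasDerivAt 0 hK').const_add u
  have hlhs : HasDerivAt (f ∘ c) (fderiv ℝ f x w) 0 :=
    hfx.hasFDerivAt.comp_hasDerivAt_of_eq 0 hw hc0.symm
  exact hlhs.unique (hrhs.congr_of_eventuallyEq hfc)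

theorem Lop_eq (hs : IsStemVector Ω f x u v) (him : im x ≠ 0) (hΩ : IsOpen Ω) (hx : x ∈ Ω)
    (hfx : DifferentiableAt ℝ f x) {m n : Fin 8} (hm : m ≠ 0) (hn : n ≠ 0) (hmn : m ≠ n) :
    Lop m n f x = (onorm (im x))⁻¹ • ((coord m x • e n - coord n x • e m) * v) := by
  rw [← hs.fderiv_apply_eq him hΩ hx hfx (continuous_planeRotation m n x)
    (planeRotation_zero m n x) (fun t => re_planeRotation t x hm hn)
    (fun t => normSq_im_planeRotation t x hm hn hmn) (hasDerivAt_planeRotation m n x)]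
  simp only [Lop, map_sub, map_smul]

theorem Gamma_eq (hs : IsStemVector Ω f x u v) (him : im x ≠ 0) (hΩ : IsOpen Ω) (hx : x ∈ Ω)
    (hfx : DifferentiableAt ℝ f x) :
    Gamma f x = (onorm (im x))⁻¹ • (6 : ℝ) • (im x * v) := by
  set A : Fin 8 → 𝕆 := fun l => coord l x • (e l * v)
  have hterm : ∀ m n : Fin 8,
      (if 1 ≤ (m : ℕ) ∧ (m : ℕ) < (n : ℕ) then e m * (e n * Lop m n f x) else 0)
        = -(onorm (im x))⁻¹ • (if 1 ≤ (m : ℕ) ∧ (m : ℕ) < (n : ℕ) then A m + A n else 0) := by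
    intro m n
    split_ifs with h
    · have hm : m ≠ 0 := by omega
      have hn : n ≠ 0 := by omega
      have hmn : m ≠ n := by omega
      simp only [hs.Lop_eq him hΩ hx hfx hm hn hmn, A, sub_mul, smul_mul_assoc, mul_sub,
        mul_smul_comm, e_mul_e_mul hn, e_mul_e_mul_e_mul hm hn hmn, mul_neg]
      module
    · rw [smul_zero]
  rw [Gamma]
  simp only [hterm, ← Finset.smul_sum, sum_pairs_eq_six_smul, im_mul_eq_sum, A]
  module

end IsStemVector

end Octonion

open Octonion in
theorem stmt15_general (Ω : Set 𝕆) (hΩo : IsOpen Ω)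
    (f : 𝕆 → 𝕆) (hC1 : ContDiffOn ℝ 1 f Ω)
    (x : 𝕆) (hx : x ∈ Ω) (him : im x ≠ 0) (u v : 𝕆) (hs : IsStemVector Ω f x u v) :
    (6 : ℝ) • (im x * v) = onorm (im x) • Gamma f x := by
  have hfx : DifferentiableAt ℝ f x :=
    (hC1.contDiffAt (hΩo.mem_nhds hx)).differentiableAt one_ne_zero
  rw [hs.Gamma_eq him hΩo hx hfx, smul_inv_smul₀ (onorm_pos him).ne']

open Octonion in
/-- for a `C¹` slice function `f` on a domain `Ω ⊆ 𝕆` and any `x ∈ Ω` with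
`Im x ≠ 0`, the stem vector `(u,v)` of `f` at `x` satisfies `6 (Im x) v = |Im x| Γf(x)`. -/
theorem stmt15 (Ω : Set 𝕆) (hΩo : IsOpen Ω) (hΩc : IsConnected Ω)
    (f : 𝕆 → 𝕆) (hf : IsSliceFunction Ω f) (hC1 : ContDiffOn ℝ 1 f Ω)
    (x : 𝕆) (hx : x ∈ Ω) (him : im x ≠ 0) (u v : 𝕆) (hs : IsStemVector Ω f x u v) :
    (6 : ℝ) • (im x * v) = onorm (im x) • Gamma f x :=
  stmt15_general Ω hΩo f hC1 x hx him u v hs
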